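/- arXiv:2107.10237 — 2 statements merged into one kernel-verified Lean document; each statement's English description precedes it below -/
import Mathlib

section
/- For A, B > 0 and x > 0, ∫_0^∞ e^{-xt} t^{A+B-1} ₁F₁(A, A+B, -t) dt = Γ(A+B) (1+x)^{-A} x^{-B}. -/
/-!
Insert Euler's integral for `₁F₁(A, A + B; -t)` and swap the two integrals (the integrand is
nonnegative). The inner `t`-integral is a Gamma integral, equal to `Γ(A + B) (x + τ)^(-(A + B))`,
which leaves `∫₀¹ τ^(A-1) (1-τ)^(B-1) (x + τ)^(-(A + B)) dτ`. The Möbius substitution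
`τ = x s / (1 + x - s)` maps `(0, 1)` onto itself and turns this into `(1 + x)^(-A) x^(-B)` times
the Beta integral `Γ(A) Γ(B) / Γ(A + B)`.
-/

open MeasureTheory Real

/-- Confluent hypergeometric function ₁F₁(a,c;z), via its Euler integral
representation (valid for c > a > 0). -/
noncomputable def oneF1 (a c z : ℝ) : ℝ :=
  (Real.Gamma c / (Real.Gamma a * Real.Gamma (c - a))) *
    ∫ τ in (0:ℝ)..1, Real.exp (z * τ) * τ ^ (a - 1) * (1 - τ) ^ (c - a - 1)

open Set

noncomputable def betaWeight (a b τ : ℝ) : ℝ := τ ^ (a - 1) * (1 - τ) ^ (b - 1)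

section BetaWeight

variable {a b : ℝ}

lemma betaWeight_nonneg {τ : ℝ} (hτ : τ ∈ Icc (0 : ℝ) 1) : 0 ≤ betaWeight a b τ :=
  mul_nonneg (rpow_nonneg hτ.1 _) (rpow_nonneg (sub_nonneg.2 hτ.2) _)

lemma ofReal_betaWeight {τ : ℝ} (hτ : τ ∈ Icc (0 : ℝ) 1) :
    (betaWeight a b τ : ℂ) =
      (τ : ℂ) ^ ((a : ℂ) - 1) * (1 - (τ : ℂ)) ^ ((b : ℂ) - 1) := by
  rw [betaWeight, Complex.ofReal_mul, Complex.ofReal_cpow hτ.1,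
    Complex.ofReal_cpow (sub_nonneg.2 hτ.2)]
  push_cast
  rfl

lemma re_betaIntegrand {τ : ℝ} (hτ : τ ∈ Ioc (0 : ℝ) 1) :
    ((τ : ℂ) ^ ((a : ℂ) - 1) * (1 - (τ : ℂ)) ^ ((b : ℂ) - 1)).re = betaWeight a b τ := by
  rw [← ofReal_betaWeight ⟨hτ.1.le, hτ.2⟩, Complex.ofReal_re]

lemma integrableOn_betaWeight (ha : 0 < a) (hb : 0 < b) :
    IntegrableOn (betaWeight a b) (Ioc 0 1) := by
  have hconv := Complex.betaIntegral_convergent (u := a) (v := b) (by simpa) (by simpa)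
  exact IntegrableOn.congr_fun hconv.1.re (fun _ hτ => re_betaIntegrand hτ) measurableSet_Ioc

lemma integral_betaWeight (ha : 0 < a) (hb : 0 < b) :
    ∫ τ in Ioc 0 1, betaWeight a b τ = Gamma a * Gamma b / Gamma (a + b) := by
  have hconv := Complex.betaIntegral_convergent (u := a) (v := b) (by simpa) (by simpa)
  change _ = ProbabilityTheory.beta a b
  rw [ProbabilityTheory.beta_eq_betaIntegralReal a b ha hb, Complex.betaIntegral,
    intervalIntegral.integral_of_le zero_le_one, ← RCLike.re_to_complex, ← integral_re hconv.1]
  exact setIntegral_congr_fun measurableSet_Ioc fun _ hτ => (re_betaIntegrand hτ).symm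

end BetaWeight

section Substitution

variable {x : ℝ}

lemma hasDerivAt_mul_div_one_add_sub {s : ℝ} (hs : 1 + x - s ≠ 0) :
    HasDerivAt (fun s => x * s / (1 + x - s)) (x * (1 + x) / (1 + x - s) ^ 2) s := by
  have hnum : HasDerivAt (fun s : ℝ => x * s) x s := by
    simpa using (hasDerivAt_id s).const_mul x
  have hden : HasDerivAt (fun s : ℝ => 1 + x - s) (-1) s := by
    simpa using (hasDerivAt_id s).const_sub (1 + x)
  refine (hnum.div hden hs).congr_deriv ?_
  ring

lemma injOn_mul_div_one_add_sub (hx : 0 < x) :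
    InjOn (fun s => x * s / (1 + x - s)) (Ioo 0 1) := by
  intro s₁ hs₁ s₂ hs₂ h
  have h₁ : 1 + x - s₁ ≠ 0 := by linarith [hs₁.2]
  have h₂ : 1 + x - s₂ ≠ 0 := by linarith [hs₂.2]
  field_simp at h
  have : x * (1 + x) * s₁ = x * (1 + x) * s₂ := by linear_combination x * h
  exact mul_left_cancel₀ (by positivity) this

lemma image_mul_div_one_add_sub_Ioo (hx : 0 < x) :
    (fun s => x * s / (1 + x - s)) '' Ioo 0 1 = Ioo 0 1 := by
  ext τ
  constructor
  · rintro ⟨s, ⟨hs₀, hs₁⟩, rfl⟩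
    have hD : 0 < 1 + x - s := by linarith
    exact ⟨by positivity, (div_lt_one hD).2 (by nlinarith)⟩
  · rintro ⟨hτ₀, hτ₁⟩
    have hxτ : 0 < x + τ := by linarith
    refine ⟨τ * (1 + x) / (x + τ), ⟨by positivity, (div_lt_one hxτ).2 (by nlinarith)⟩,
      ?_⟩
    have hD : 1 + x - τ * (1 + x) / (x + τ) = (1 + x) * x / (x + τ) := by
      field_simp
      ring
    simp only [hD]
    field_simp

lemma betaWeight_mul_add_rpow_substitution {a b s : ℝ} (hx : 0 < x) (hs : s ∈ Ioo (0 : ℝ) 1) :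
    betaWeight a b (x * s / (1 + x - s)) * (x + x * s / (1 + x - s)) ^ (-(a + b)) *
        (x * (1 + x) / (1 + x - s) ^ 2) =
      (1 + x) ^ (-a) * x ^ (-b) * betaWeight a b s := by
  obtain ⟨hs₀, hs₁⟩ := hs
  have hD : 0 < 1 + x - s := by linarith
  have h1x : 0 < 1 + x := by linarith
  have h1s : 0 < 1 - s := by linarith
  have h1τ : 1 - x * s / (1 + x - s) = (1 + x) * (1 - s) / (1 + x - s) := by
    field_simp
    ring
  have hxτ : x + x * s / (1 + x - s) = x * (1 + x) / (1 + x - s) := by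
    field_simp
    ring
  -- All factors are positive, so it suffices to compare the exponents of `x`, `1 + x`, `s`,
  -- `1 - s` and `1 + x - s` after taking logarithms.
  rw [betaWeight, betaWeight, h1τ, hxτ,
    rpow_def_of_pos (by positivity : 0 < x * s / (1 + x - s)),
    rpow_def_of_pos (by positivity : 0 < (1 + x) * (1 - s) / (1 + x - s)),
    rpow_def_of_pos (by positivity : 0 < x * (1 + x) / (1 + x - s)),
    rpow_def_of_pos h1x, rpow_def_of_pos hx, rpow_def_of_pos hs₀, rpow_def_of_pos h1s,
    ← exp_log (by positivity : 0 < x * (1 + x) / (1 + x - s) ^ 2)]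
  simp only [← exp_add]
  congr 1
  rw [log_div (by positivity) hD.ne', log_div (by positivity) hD.ne',
    log_div (by positivity) hD.ne', log_div (by positivity) (by positivity),
    log_mul hx.ne' hs₀.ne', log_mul h1x.ne' h1s.ne', log_mul hx.ne' h1x.ne', log_pow]
  push_cast
  ring

lemma integral_betaWeight_mul_add_rpow {a b : ℝ} (hx : 0 < x) :
    ∫ τ in Ioc 0 1, betaWeight a b τ * (x + τ) ^ (-(a + b)) =
      (1 + x) ^ (-a) * x ^ (-b) * ∫ τ in Ioc 0 1, betaWeight a b τ := by
  have hderiv : ∀ s ∈ Ioo (0 : ℝ) 1, HasDerivWithinAt (fun s => x * s / (1 + x - s))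
      (x * (1 + x) / (1 + x - s) ^ 2) (Ioo 0 1) s := fun s hs =>
    (hasDerivAt_mul_div_one_add_sub (by linarith [hs.2])).hasDerivWithinAt
  have hsubst := integral_image_eq_integral_abs_deriv_smul measurableSet_Ioo hderiv
    (injOn_mul_div_one_add_sub hx) fun τ => betaWeight a b τ * (x + τ) ^ (-(a + b))
  rw [image_mul_div_one_add_sub_Ioo hx] at hsubst
  rw [integral_Ioc_eq_integral_Ioo, integral_Ioc_eq_integral_Ioo, hsubst, ← integral_const_mul]
  refine setIntegral_congr_fun measurableSet_Ioo fun s hs => ?_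
  have hD : 0 < 1 + x - s := by linarith [hs.2]
  rw [smul_eq_mul, abs_of_pos (by positivity), mul_comm,
    betaWeight_mul_add_rpow_substitution hx hs]

end Substitution

section Laplace

variable {a b x : ℝ}

lemma integral_exp_neg_mul_mul_rpow {r s : ℝ} (hr : 0 < r) (hs : 0 < s) :
    ∫ t in Ioi 0, exp (-(r * t)) * t ^ (s - 1) = Gamma s * r ^ (-s) := by
  simp_rw [mul_comm (exp _)]
  rw [integral_rpow_mul_exp_neg_mul_Ioi hs hr, one_div, inv_rpow hr.le, rpow_neg hr.le, mul_comm]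

lemma integral_exp_neg_mul_mul_rpow_mul_betaWeight {τ : ℝ} (hab : 0 < a + b)
    (hxτ : 0 < x + τ) :
    ∫ t in Ioi 0, exp (-((x + τ) * t)) * t ^ (a + b - 1) * betaWeight a b τ =
      Gamma (a + b) * (betaWeight a b τ * (x + τ) ^ (-(a + b))) := by
  rw [integral_mul_const, integral_exp_neg_mul_mul_rpow hxτ hab]
  ring

lemma integrable_exp_neg_mul_mul_rpow_mul_betaWeight (ha : 0 < a) (hb : 0 < b) (hx : 0 < x) :
    Integrable (Function.uncurry fun τ t : ℝ =>
        exp (-((x + τ) * t)) * t ^ (a + b - 1) * betaWeight a b τ)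
      ((volume.restrict (Ioc 0 1)).prod (volume.restrict (Ioi 0))) := by
  have hmeas : Measurable (Function.uncurry fun τ t : ℝ =>
      exp (-((x + τ) * t)) * t ^ (a + b - 1) * betaWeight a b τ) := by
    unfold betaWeight
    fun_prop
  refine (integrable_prod_iff hmeas.aestronglyMeasurable).2 ⟨?_, ?_⟩
  · filter_upwards [ae_restrict_mem measurableSet_Ioc] with τ hτ
    have hGamma : IntegrableOn (fun t => exp (-((x + τ) * t)) * t ^ (a + b - 1)) (Ioi 0) :=
      (integrableOn_rpow_mul_exp_neg_mul_rpow (p := 1) (s := a + b - 1) (by linarith)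
        zero_lt_one (by linarith [hτ.1] : 0 < x + τ)).congr_fun
        (fun t _ => by simp only [rpow_one, neg_mul]; ring) measurableSet_Ioi
    simpa only [Function.uncurry_apply_pair] using hGamma.mul_const (betaWeight a b τ)
  · have hcont : ContinuousOn (fun τ : ℝ => Gamma (a + b) * (x + τ) ^ (-(a + b))) (Icc 0 1) :=
      continuousOn_const.mul <| ContinuousOn.rpow_const (by fun_prop)
        fun τ hτ => Or.inl (by linarith [hτ.1])
    have hbeta : IntegrableOn (betaWeight a b) (Icc 0 1) :=
      (integrableOn_Icc_iff_integrableOn_Ioc (by simp)).2 (integrableOn_betaWeight ha hb)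
    refine ((hbeta.mul_continuousOn hcont isCompact_Icc).mono_set Ioc_subset_Icc_self).congr ?_
    filter_upwards [ae_restrict_mem measurableSet_Ioc] with τ hτ
    rw [mul_left_comm,
      ← integral_exp_neg_mul_mul_rpow_mul_betaWeight (add_pos ha hb) (by linarith [hτ.1])]
    refine setIntegral_congr_fun measurableSet_Ioi fun t (ht : 0 < t) => ?_
    have hw := betaWeight_nonneg (a := a) (b := b) ⟨hτ.1.le, hτ.2⟩
    simp only [Function.uncurry_apply_pair, norm_of_nonneg (by positivity : 0 ≤
      exp (-((x + τ) * t)) * t ^ (a + b - 1) * betaWeight a b τ)]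

end Laplace

lemma mul_oneF1_neg_eq_integral (a b x t : ℝ) :
    exp (-(x * t)) * t ^ (a + b - 1) * oneF1 a (a + b) (-t) =
      Gamma (a + b) / (Gamma a * Gamma b) *
        ∫ τ in Ioc 0 1, exp (-((x + τ) * t)) * t ^ (a + b - 1) * betaWeight a b τ := by
  rw [oneF1, add_sub_cancel_left, intervalIntegral.integral_of_le zero_le_one,
    mul_left_comm, ← integral_const_mul]
  congr 1
  refine setIntegral_congr_fun measurableSet_Ioc fun τ _ => ?_
  rw [betaWeight, add_mul, neg_add, exp_add]
  ring_nf

theorem stmt_5 (A B x : ℝ) (hA : 0 < A) (hB : 0 < B) (hx : 0 < x) :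
    ∫ t in Set.Ioi (0 : ℝ),
        Real.exp (-(x * t)) * t ^ (A + B - 1) * oneF1 A (A + B) (-t) =
      Real.Gamma (A + B) * (1 + x) ^ (-A) * x ^ (-B) := by
  have hΓ : Gamma A * Gamma B ≠ 0 := by positivity
  calc ∫ t in Ioi 0, exp (-(x * t)) * t ^ (A + B - 1) * oneF1 A (A + B) (-t)
      = Gamma (A + B) / (Gamma A * Gamma B) * ∫ t in Ioi 0, ∫ τ in Ioc 0 1,
          exp (-((x + τ) * t)) * t ^ (A + B - 1) * betaWeight A B τ := by
        simp_rw [mul_oneF1_neg_eq_integral, integral_const_mul]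
    _ = Gamma (A + B) / (Gamma A * Gamma B) * ∫ τ in Ioc 0 1, ∫ t in Ioi 0,
          exp (-((x + τ) * t)) * t ^ (A + B - 1) * betaWeight A B τ := by
        rw [integral_integral_swap (integrable_exp_neg_mul_mul_rpow_mul_betaWeight hA hB hx)]
    _ = Gamma (A + B) / (Gamma A * Gamma B) * ∫ τ in Ioc 0 1,
          Gamma (A + B) * (betaWeight A B τ * (x + τ) ^ (-(A + B))) := by
        rw [setIntegral_congr_fun measurableSet_Ioc fun τ hτ =>
          integral_exp_neg_mul_mul_rpow_mul_betaWeight (add_pos hA hB) (by linarith [hτ.1])]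
    _ = Gamma (A + B) * (1 + x) ^ (-A) * x ^ (-B) := by
        rw [integral_const_mul, integral_betaWeight_mul_add_rpow hx, integral_betaWeight hA hB]
        field_simp
end

section
/- For real parameters a and with c > b > 0, 0 ≤ z < 1: ∫_0^1 t^{b-1} (1-t)^{c-b-1} (1 - z t)^{-a} dt = β(b, c-b) · ₂F₁(a, b, c; z), where ₂F₁ is defined by its power series ∑_{n≥0} (a)_n (b)_n / (n! (c)_n) z^n. -/
/-
Expand `(1 - z t)^(-a) = ∑ (a)_n / n! (z t)^n` by the binomial series, whose Mathlib
coefficients `Ring.choose (a + n - 1) n` are `(a)_n / n!`, and integrate termwise against the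
Beta kernel `t^(b-1) (1-t)^(c-b-1)`. The `n`-th term contributes
`β(b + n, c - b) = β(b, c - b) (b)_n / (c)_n`, and since `β(b + n, c - b) ≤ β(b, c - b)` the
integrals of the absolute values are dominated by the convergent series
`β(b, c - b) ∑ |(a)_n| / n! |z|^n`, which justifies the interchange.
-/

open MeasureTheory Real

/-- Pochhammer symbol (a)_n = a(a+1)⋯(a+n-1). -/
noncomputable def poch (a : ℝ) (n : ℕ) : ℝ := (ascPochhammer ℝ n).eval a

/-- Beta function. -/
noncomputable def betaFn (a b : ℝ) : ℝ := Real.Gamma a * Real.Gamma b / Real.Gamma (a + b)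

/-- Gauss hypergeometric function ₂F₁(a,b,c;z), defined by its power series. -/
noncomputable def twoF1 (a b c z : ℝ) : ℝ :=
  ∑' n : ℕ, (poch a n * poch b n) / ((n.factorial : ℝ) * poch c n) * z ^ n

lemma poch_succ (a : ℝ) (n : ℕ) : poch a (n + 1) = poch a n * (a + n) := by
  simp [poch, ascPochhammer_succ_eval]

lemma poch_pos {a : ℝ} (ha : 0 < a) (n : ℕ) : 0 < poch a n :=
  ascPochhammer_pos n a ha

lemma poch_le_poch {a b : ℝ} (ha : 0 < a) (hab : a ≤ b) (n : ℕ) : poch a n ≤ poch b n := by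
  induction n with
  | zero => simp [poch]
  | succ n ih =>
    rw [poch_succ, poch_succ]
    have := poch_pos ha n
    have := poch_pos (ha.trans_le hab) n
    gcongr

lemma Gamma_add_natCast_eq_mul_poch {x : ℝ} (hx : 0 < x) (n : ℕ) :
    Gamma (x + n) = Gamma x * poch x n := by
  induction n with
  | zero => simp [poch]
  | succ n ih =>
    rw [Nat.cast_succ, ← add_assoc, Gamma_add_one (by positivity), ih, poch_succ]
    ring

lemma ringChoose_add_sub_one_eq_poch_div_factorial (a : ℝ) (n : ℕ) :
    Ring.choose (a + n - 1) n = poch a n / n.factorial := by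
  rw [Ring.choose_eq_smul, Polynomial.descPochhammer_smeval_eq_ascPochhammer,
    Polynomial.ascPochhammer_smeval_eq_eval, smul_eq_mul, poch]
  ring_nf

lemma hasSum_poch_div_factorial_mul_pow (a : ℝ) {x : ℝ} (hx : |x| < 1) :
    HasSum (fun n : ℕ => poch a n / n.factorial * x ^ n) ((1 - x) ^ (-a)) := by
  have h := (one_div_one_sub_rpow_hasFPowerSeriesOnBall_zero a).hasSum
    (y := x) (by simpa [enorm_eq_nnnorm, ← NNReal.coe_lt_one] using hx)
  rw [rpow_neg (by linarith [le_abs_self x])]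
  simpa [FormalMultilinearSeries.ofScalars_apply_eq, ringChoose_add_sub_one_eq_poch_div_factorial,
    mul_comm] using h

lemma summable_abs_poch_div_factorial_mul_pow (a : ℝ) {x : ℝ} (hx : |x| < 1) :
    Summable (fun n : ℕ => |poch a n| / n.factorial * |x| ^ n) := by
  have h := one_div_one_sub_rpow_hasFPowerSeriesOnBall_zero a
  have := FormalMultilinearSeries.summable_norm_apply _ (x := x) (Metric.eball_subset_eball h.r_le
    (by simpa [enorm_eq_nnnorm, ← NNReal.coe_lt_one] using hx))
  simpa [FormalMultilinearSeries.ofScalars_apply_eq, ringChoose_add_sub_one_eq_poch_div_factorial,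
    abs_div, mul_comm] using this

-- `betaFn` is definitionally `ProbabilityTheory.beta`.
lemma betaFn_pos {p q : ℝ} (hp : 0 < p) (hq : 0 < q) : 0 < betaFn p q :=
  ProbabilityTheory.beta_pos hp hq

lemma betaFn_add_natCast {p q : ℝ} (hp : 0 < p) (hq : 0 < q) (n : ℕ) :
    betaFn (p + n) q = betaFn p q * (poch p n / poch (p + q) n) := by
  have hpq : 0 < p + q := add_pos hp hq
  have := (Gamma_pos_of_pos hpq).ne'
  have := (poch_pos hpq n).ne'
  rw [betaFn, betaFn, add_right_comm, Gamma_add_natCast_eq_mul_poch hp,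
    Gamma_add_natCast_eq_mul_poch hpq]
  field_simp

lemma betaFn_add_natCast_le {p q : ℝ} (hp : 0 < p) (hq : 0 < q) (n : ℕ) :
    betaFn (p + n) q ≤ betaFn p q := by
  rw [betaFn_add_natCast hp hq]
  refine mul_le_of_le_one_right (betaFn_pos hp hq).le ?_
  exact div_le_one_of_le₀ (poch_le_poch hp (by linarith) n) (poch_pos (add_pos hp hq) n).le

-- Mathlib knows integrability and value of the Beta integral only for the complex kernel.
lemma ofReal_betaKernel {p q t : ℝ} (ht : t ∈ Set.uIcc 0 1) :
    ((t ^ (p - 1) * (1 - t) ^ (q - 1) : ℝ) : ℂ) =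
      (t : ℂ) ^ ((p : ℂ) - 1) * (1 - (t : ℂ)) ^ ((q : ℂ) - 1) := by
  rw [Set.uIcc_of_le zero_le_one] at ht
  rw [Complex.ofReal_mul, Complex.ofReal_cpow ht.1, Complex.ofReal_cpow (sub_nonneg.2 ht.2)]
  push_cast
  rfl

lemma intervalIntegrable_betaKernel {p q : ℝ} (hp : 0 < p) (hq : 0 < q) :
    IntervalIntegrable (fun t : ℝ => t ^ (p - 1) * (1 - t) ^ (q - 1)) volume 0 1 := by
  have h := (Complex.betaIntegral_convergent (u := p) (v := q) (by simpa) (by simpa)).norm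
  refine h.congr fun t ht => ?_
  have ht' := Set.uIoc_subset_uIcc ht
  rw [← ofReal_betaKernel ht', Complex.norm_real, Real.norm_of_nonneg]
  rw [Set.uIcc_of_le zero_le_one] at ht'
  have := sub_nonneg.2 ht'.2
  have := ht'.1
  positivity

lemma integral_betaKernel {p q : ℝ} (hp : 0 < p) (hq : 0 < q) :
    ∫ t in (0 : ℝ)..1, t ^ (p - 1) * (1 - t) ^ (q - 1) = betaFn p q := by
  have h := ProbabilityTheory.beta_eq_betaIntegralReal p q hp hq
  rw [Complex.betaIntegral, ← intervalIntegral.integral_congr (fun t ht => ofReal_betaKernel ht),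
    intervalIntegral.integral_ofReal, Complex.ofReal_re] at h
  exact h.symm

lemma integral_betaKernel_mul_tsum {p q : ℝ} (hp : 0 < p) (hq : 0 < q) {s : ℕ → ℝ}
    (hs : Summable fun n : ℕ => |s n| * betaFn (p + n) q) :
    ∫ t in (0 : ℝ)..1, t ^ (p - 1) * (1 - t) ^ (q - 1) * ∑' n : ℕ, s n * t ^ n =
      ∑' n : ℕ, s n * betaFn (p + n) q := by
  set F : ℕ → ℝ → ℝ := fun n t => s n * (t ^ (p + n - 1) * (1 - t) ^ (q - 1))
  have hkernel (n : ℕ) := integral_betaKernel (q := q) (by positivity : 0 < p + n) hq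
  have hF_int (n : ℕ) : IntegrableOn (F n) (Set.Ioc 0 1) := by
    have h := intervalIntegrable_betaKernel (q := q) (by positivity : 0 < p + n) hq
    exact ((intervalIntegrable_iff_integrableOn_Ioc_of_le zero_le_one).1 h).const_mul (s n)
  have hF_integral (n : ℕ) : ∫ t in Set.Ioc 0 1, F n t = s n * betaFn (p + n) q := by
    rw [integral_const_mul, ← intervalIntegral.integral_of_le zero_le_one, hkernel]
  have hF_norm (n : ℕ) : ∫ t in Set.Ioc 0 1, ‖F n t‖ = |s n| * betaFn (p + n) q := by
    rw [← hkernel, intervalIntegral.integral_of_le zero_le_one, ← integral_const_mul]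
    refine setIntegral_congr_fun measurableSet_Ioc fun t ht => ?_
    have := sub_nonneg.2 ht.2
    have := ht.1.le
    rw [Real.norm_eq_abs, abs_mul, abs_of_nonneg (a := t ^ _ * _) (by positivity)]
  have hF_tsum : Set.EqOn (fun t => t ^ (p - 1) * (1 - t) ^ (q - 1) * ∑' n : ℕ, s n * t ^ n)
      (fun t => ∑' n, F n t) (Set.Ioc 0 1) := fun t ht => by
    simp only [F, ← tsum_mul_left]
    congr 1 with n
    rw [add_sub_right_comm, rpow_add_natCast ht.1.ne']
    ring
  rw [intervalIntegral.integral_of_le zero_le_one, setIntegral_congr_fun measurableSet_Ioc hF_tsum,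
    ← integral_tsum_of_summable_integral_norm hF_int (by simpa only [hF_norm] using hs)]
  simp only [hF_integral]

theorem stmt_8 (a b c z : ℝ) (hb : 0 < b) (hbc : b < c) (hz0 : 0 ≤ z) (hz1 : z < 1) :
    ∫ t in (0:ℝ)..1, t ^ (b - 1) * (1 - t) ^ (c - b - 1) * (1 - z * t) ^ (-a) =
      betaFn b (c - b) * twoF1 a b c z := by
  have hcb : 0 < c - b := sub_pos.2 hbc
  have hz : |z| < 1 := by rwa [abs_of_nonneg hz0]
  set s : ℕ → ℝ := fun n => poch a n / n.factorial * z ^ n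
  have hexpand : Set.EqOn
      (fun t => t ^ (b - 1) * (1 - t) ^ (c - b - 1) * (1 - z * t) ^ (-a))
      (fun t => t ^ (b - 1) * (1 - t) ^ (c - b - 1) * ∑' n, s n * t ^ n) (Set.uIcc 0 1) :=
    fun t ht => by
      rw [Set.uIcc_of_le zero_le_one] at ht
      have hzt : |z * t| < 1 := by
        rw [abs_mul, abs_of_nonneg ht.1]
        nlinarith [abs_nonneg z, ht.2]
      simp only [s, mul_assoc, ← mul_pow]
      rw [(hasSum_poch_div_factorial_mul_pow a hzt).tsum_eq]
  have hs : Summable fun n : ℕ => |s n| * betaFn (b + n) (c - b) := by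
    refine ((summable_abs_poch_div_factorial_mul_pow a hz).mul_right
      (betaFn b (c - b))).of_nonneg_of_le
      (fun n => mul_nonneg (abs_nonneg _) (betaFn_pos (by positivity) hcb).le) fun n => ?_
    simp only [s, abs_mul, abs_div, Nat.abs_cast, abs_pow]
    gcongr
    exact betaFn_add_natCast_le hb hcb n
  rw [intervalIntegral.integral_congr hexpand, integral_betaKernel_mul_tsum hb hcb hs, twoF1,
    ← tsum_mul_left]
  congr 1 with n
  have := (poch_pos (hb.trans hbc) n).ne'
  simp only [s, betaFn_add_natCast hb hcb, add_sub_cancel]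
  field_simp
end
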